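/- The rewriting system on formulas given by orienting the equations A∧(B∧C) ↦ (A∧B)∧C, A∧⊤ ↦ A, ⊤∧A ↦ A, (A∧B)→C ↦ A→(B→C), ⊤→A ↦ A, A→(B∧C) ↦ (A→B)∧(A→C), A→⊤ ↦ ⊤, ∀x(A∧B) ↦ (∀x A)∧(∀x B), ∀x⊤ ↦ ⊤, A→∀x B ↦ ∀x(A→B) (x not free in A), applied at any position in a formula, is terminating: there is no infinite rewriting sequence. -/

import Mathlib

inductive Formula : Type where
  | top : Formula
  | bot : Formula
  | atom : ℕ → List ℕ → Formula
  | arr : Formula → Formula → Formula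
  | and : Formula → Formula → Formula
  | all : Formula → Formula

/-- The measure φ on formulas. -/
def phi : Formula → ℕ
  | .top => 2
  | .bot => 2
  | .atom _ _ => 2
  | .and A B => 2 * (phi A + 1) * phi B
  | .arr A B => phi B ^ phi A
  | .all A => phi A ^ 2

/-- The measure ψ on formulas. -/
def psi : Formula → ℕ
  | .top => 2
  | .bot => 2
  | .atom _ _ => 2
  | .and A B => 2 * (psi A + 1) * psi B
  | .arr A B => psi B ^ psi A
  | .all A => 2 * psi A

/-- Shift the free de Bruijn term-variable indices ≥ c up by one. -/
def Formula.shiftFrom : ℕ → Formula → Formula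
  | _, .top => .top
  | _, .bot => .bot
  | c, .atom X args => .atom X (args.map fun n => if n < c then n else n + 1)
  | c, .arr A B => .arr (A.shiftFrom c) (B.shiftFrom c)
  | c, .and A B => .and (A.shiftFrom c) (B.shiftFrom c)
  | c, .all A => .all (A.shiftFrom (c + 1))

/-- `A.shift` is A regarded under one more binder ("x not free in A"). -/
def Formula.shift (A : Formula) : Formula := A.shiftFrom 0

/-- One-step rewriting: the ten oriented isomorphism equations, closed under
formula contexts.  (De Bruijn style: the side condition "x not free in A" of
the last rule is realized by shifting A under the binder.) -/
inductive Rw : Formula → Formula → Prop where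
  | andAssoc (A B C) : Rw (.and A (.and B C)) (.and (.and A B) C)
  | andTopR (A) : Rw (.and A .top) A
  | andTopL (A) : Rw (.and .top A) A
  | curry (A B C) : Rw (.arr (.and A B) C) (.arr A (.arr B C))
  | topArr (A) : Rw (.arr .top A) A
  | distrib (A B C) : Rw (.arr A (.and B C)) (.and (.arr A B) (.arr A C))
  | arrTop (A) : Rw (.arr A .top) .top
  | allAnd (A B) : Rw (.all (.and A B)) (.and (.all A) (.all B))
  | allTop : Rw (.all .top) .top
  | arrAll (A B) : Rw (.arr A (.all B)) (.all (.arr A.shift B))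
  | arrL {A A'} (B) : Rw A A' → Rw (.arr A B) (.arr A' B)
  | arrR (A) {B B'} : Rw B B' → Rw (.arr A B) (.arr A B')
  | andL {A A'} (B) : Rw A A' → Rw (.and A B) (.and A' B)
  | andR (A) {B B'} : Rw B B' → Rw (.and A B) (.and A B')
  | allC {A A'} : Rw A A' → Rw (.all A) (.all A')

/-!
Each rewrite step decreases `φ` strictly, except `A → ∀x B ↦ ∀x (A → B)`, which preserves `φ`
(both sides have `φ = φ(B) ^ (2 φ(A))`) and decreases `ψ`, since `(2 ψ(B)) ^ ψ(A) > 2 ψ(B) ^ ψ(A)`.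
Both measures are at least `2`, so every connective is strictly monotone in each argument for
both of them; hence the lexicographic decrease of `(φ, ψ)` propagates through contexts.
-/

theorem Prod.Lex.toLex_map_lt_toLex_map {α β γ δ : Type*} [Preorder α] [Preorder β]
    [Preorder γ] [Preorder δ] {f : α → γ} {g : β → δ} (hf : StrictMono f) (hg : StrictMono g)
    {a a' : α} {b b' : β} (h : toLex (a, b) < toLex (a', b')) :
    toLex (f a, g b) < toLex (f a', g b') := by
  rcases Prod.Lex.lt_iff.mp h with ha | ⟨rfl, hb⟩
  · exact Prod.Lex.lt_iff.mpr (.inl (hf ha))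
  · exact Prod.Lex.lt_iff.mpr (.inr ⟨rfl, hg hb⟩)

theorem Nat.two_mul_pow_lt_mul_pow {a b : ℕ} (ha : 2 ≤ a) (hb : 0 < b) :
    2 * b ^ a < (2 * b) ^ a := by
  have h2 : 2 < 2 ^ a := (pow_one 2).symm.trans_lt (Nat.pow_lt_pow_right (by norm_num) ha)
  rw [mul_pow]
  exact Nat.mul_lt_mul_of_pos_right h2 (by positivity)

theorem Nat.two_mul_succ_pow_mul_pow_lt {a b c : ℕ} (ha : 2 ≤ a) (hc : 0 < c) :
    2 * (b ^ a + 1) * c ^ a < (2 * (b + 1) * c) ^ a := by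
  have hb : b ^ a + 1 ≤ (b + 1) ^ a := Nat.pow_lt_pow_left (Nat.lt_succ_self b) (by omega)
  have h4 : 4 ≤ 2 ^ a := (Nat.pow_le_pow_right (by norm_num) ha).trans_eq' (by norm_num)
  have hpos : 0 < (b + 1) ^ a * c ^ a := by positivity
  rw [mul_pow, mul_pow, mul_assoc (2 ^ a)]
  calc 2 * (b ^ a + 1) * c ^ a ≤ 2 * ((b + 1) ^ a * c ^ a) := by
        rw [mul_assoc]; exact Nat.mul_le_mul_left 2 (Nat.mul_le_mul_right _ hb)
    _ < 4 * ((b + 1) ^ a * c ^ a) := by omega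
    _ ≤ 2 ^ a * ((b + 1) ^ a * c ^ a) := Nat.mul_le_mul_right _ h4

namespace Formula

theorem two_le_phi (A : Formula) : 2 ≤ phi A := by
  induction A with
  | top | bot | atom => simp [phi]
  | arr A B hA hB => exact hB.trans (Nat.le_self_pow (by omega) _)
  | and A B _ hB => simp only [phi]; nlinarith
  | all A hA => simp only [phi]; nlinarith

theorem two_le_psi (A : Formula) : 2 ≤ psi A := by
  induction A with
  | top | bot | atom => simp [psi]
  | arr A B hA hB => exact hB.trans (Nat.le_self_pow (by omega) _)
  | and A B _ hB => simp only [psi]; nlinarith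
  | all A hA => simp only [psi]; omega

@[simp]
theorem phi_shiftFrom (c : ℕ) (A : Formula) : phi (A.shiftFrom c) = phi A := by
  induction A generalizing c <;> simp_all [shiftFrom, phi]

@[simp]
theorem psi_shiftFrom (c : ℕ) (A : Formula) : psi (A.shiftFrom c) = psi A := by
  induction A generalizing c <;> simp_all [shiftFrom, psi]

def weight (A : Formula) : ℕ ×ₗ ℕ := toLex (phi A, psi A)

theorem weight_lt_of_phi_lt {A B : Formula} (h : phi B < phi A) : weight B < weight A :=
  Prod.Lex.lt_iff.mpr (.inl h)

theorem weight_all_arr_shift_lt (A B : Formula) :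
    weight (all (arr A.shift B)) < weight (arr A (all B)) := by
  refine Prod.Lex.lt_iff.mpr (.inr ⟨?_, ?_⟩)
  · show (phi B ^ phi A.shift) ^ 2 = (phi B ^ 2) ^ phi A
    rw [shift, phi_shiftFrom, ← pow_mul, ← pow_mul, mul_comm]
  · show 2 * psi B ^ psi A.shift < (2 * psi B) ^ psi A
    rw [shift, psi_shiftFrom]
    exact Nat.two_mul_pow_lt_mul_pow (two_le_psi A) (by have := two_le_psi B; omega)

theorem weight_arr_lt_of_left {A A' : Formula} (B : Formula) (h : weight A' < weight A) :
    weight (arr A' B) < weight (arr A B) :=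
  Prod.Lex.toLex_map_lt_toLex_map (pow_right_strictMono₀ (two_le_phi B))
    (pow_right_strictMono₀ (two_le_psi B)) h

theorem weight_arr_lt_of_right (A : Formula) {B B' : Formula} (h : weight B' < weight B) :
    weight (arr A B') < weight (arr A B) :=
  Prod.Lex.toLex_map_lt_toLex_map (Nat.pow_left_strictMono (by have := two_le_phi A; omega))
    (Nat.pow_left_strictMono (by have := two_le_psi A; omega)) h

theorem weight_and_lt_of_left {A A' : Formula} (B : Formula) (h : weight A' < weight A) :
    weight (and A' B) < weight (and A B) :=
  Prod.Lex.toLex_map_lt_toLex_map (f := fun x => 2 * (x + 1) * phi B)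
    (g := fun x => 2 * (x + 1) * psi B)
    (fun x y hxy => by have := two_le_phi B; dsimp only; nlinarith)
    (fun x y hxy => by have := two_le_psi B; dsimp only; nlinarith) h

theorem weight_and_lt_of_right (A : Formula) {B B' : Formula} (h : weight B' < weight B) :
    weight (and A B') < weight (and A B) :=
  Prod.Lex.toLex_map_lt_toLex_map (f := fun x => 2 * (phi A + 1) * x)
    (g := fun x => 2 * (psi A + 1) * x)
    (fun x y hxy => by dsimp only; nlinarith) (fun x y hxy => by dsimp only; nlinarith) h

theorem weight_all_lt {A A' : Formula} (h : weight A' < weight A) :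
    weight (all A') < weight (all A) :=
  Prod.Lex.toLex_map_lt_toLex_map (f := (· ^ 2)) (g := (2 * ·))
    (Nat.pow_left_strictMono two_ne_zero) (fun x y hxy => by dsimp only; omega) h

end Formula

open Formula

theorem Rw.weight_lt {A B : Formula} (h : Rw A B) : weight B < weight A := by
  induction h with
  | andAssoc A B C =>
    apply weight_lt_of_phi_lt
    have := two_le_phi A; have := two_le_phi B; have := two_le_phi C
    simp only [phi]; nlinarith
  | andTopR A => apply weight_lt_of_phi_lt; simp only [phi]; omega
  | andTopL A =>
    apply weight_lt_of_phi_lt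
    have := two_le_phi A
    simp only [phi]; omega
  | curry A B C =>
    apply weight_lt_of_phi_lt
    have := two_le_phi A; have := two_le_phi B
    simp only [phi, ← pow_mul]
    exact Nat.pow_lt_pow_right (two_le_phi C) (by nlinarith)
  | topArr A => exact weight_lt_of_phi_lt (lt_self_pow₀ (two_le_phi A) one_lt_two)
  | distrib A B C =>
    exact weight_lt_of_phi_lt
      (Nat.two_mul_succ_pow_mul_pow_lt (two_le_phi A) (by have := two_le_phi C; omega))
  | arrTop A =>
    exact weight_lt_of_phi_lt
      ((pow_one 2).symm.trans_lt (Nat.pow_lt_pow_right (by norm_num) (two_le_phi A)))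
  | allAnd A B =>
    apply weight_lt_of_phi_lt
    have := two_le_phi A; have := two_le_phi B
    simp only [phi]; nlinarith
  | allTop => exact weight_lt_of_phi_lt (by simp [phi])
  | arrAll A B => exact weight_all_arr_shift_lt A B
  | arrL B _ ih => exact weight_arr_lt_of_left B ih
  | arrR A _ ih => exact weight_arr_lt_of_right A ih
  | andL B _ ih => exact weight_and_lt_of_left B ih
  | andR A _ ih => exact weight_and_lt_of_right A ih
  | allC _ ih => exact weight_all_lt ih

/-- The rewriting system is terminating: there is no infinite rewriting
sequence. -/
theorem rw_terminating : ¬ ∃ f : ℕ → Formula, ∀ n : ℕ, Rw (f n) (f (n + 1)) := by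
  rintro ⟨f, hf⟩
  exact not_strictAnti_of_wellFoundedLT (weight ∘ f)
    (strictAnti_nat_of_succ_lt fun n => (hf n).weight_lt)
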